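/- arXiv:2011.13020 — 5 statements merged into one kernel-verified Lean document; each statement's English description precedes it below -/
import Mathlib

section
/- Let X be a totally symmetric subset of a group G (i.e., the elements of X pairwise commute and every permutation of X is realized by conjugation by some element of G), and let ρ : G → H be a group homomorphism. Then ρ(X) is either a singleton or a totally symmetric subset of H of the same cardinality as X. -/
/-- A subset `X` of a group `G` is *totally symmetric* if its elements commute
pairwise and every permutation of `X` is realized by conjugation by an element
of `G`. -/
def IsTotallySymmetric {G : Type*} [Group G] (X : Set G) : Prop :=
  (∀ x ∈ X, ∀ y ∈ X, x * y = y * x) ∧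
  ∀ σ : Equiv.Perm X, ∃ g : G, ∀ x : X, g * (x : G) * g⁻¹ = (σ x : G)

/-- If `X` is a totally symmetric subset of `G` and `ρ : G → H` a homomorphism,
then `ρ(X)` is a singleton or a totally symmetric subset of `H` of the same
cardinality as `X`. -/
theorem stmt_0 {G H : Type*} [Group G] [Group H] (X : Set G)
    (hX : IsTotallySymmetric X) (ρ : G →* H) :
    (∃ h : H, ρ '' X = {h}) ∨
      (IsTotallySymmetric (ρ '' X) ∧ (ρ '' X).ncard = X.ncard) := by
  obtain ⟨hcomm, hperm⟩ := hX
  by_cases hinj : Set.InjOn ρ X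
  · right
    refine ⟨⟨?_, ?_⟩, Set.ncard_image_of_injOn hinj⟩
    · rintro _ ⟨x, hx, rfl⟩ _ ⟨y, hy, rfl⟩
      rw [← map_mul, ← map_mul, hcomm x hx y hy]
    · intro τ
      set e : X ≃ (ρ '' X : Set H) := Equiv.Set.imageOfInjOn ρ X hinj with he
      obtain ⟨g, hg⟩ := hperm (e.trans (τ.trans e.symm))
      refine ⟨ρ g, fun z => ?_⟩
      have h1 := hg (e.symm z)
      have h2 : ρ (g * ((e.symm z : X) : G) * g⁻¹) = ρ ((e.trans (τ.trans e.symm)) (e.symm z) : G) := by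
        rw [h1]
      simp only [map_mul, map_inv] at h2
      have h3 : ρ ((e.symm z : X) : G) = (z : H) := by
        have := e.apply_symm_apply z
        have : ((e (e.symm z)) : H) = (z : H) := by rw [e.apply_symm_apply]
        simpa [he, Equiv.Set.imageOfInjOn] using this
      rw [h3] at h2
      rw [h2]
      simp only [Equiv.trans_apply, e.apply_symm_apply]
      show ρ ((e.symm (τ z) : X) : G) = ((τ z : (ρ '' X : Set H)) : H)
      have : ((e (e.symm (τ z))) : H) = ((τ z) : H) := by rw [e.apply_symm_apply]
      simpa [he, Equiv.Set.imageOfInjOn] using this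
  · left
    rw [Set.InjOn] at hinj
    push_neg at hinj
    obtain ⟨x, hx, y, hy, hxy, hne⟩ := hinj
    have key : ∀ a ∈ X, ∀ b ∈ X, ρ a = ρ b := by
      intro a ha b hb
      rcases eq_or_ne a b with rfl | hab
      · rfl
      · -- build a permutation sending x ↦ a, y ↦ b
        classical
        set x' : X := ⟨x, hx⟩
        set y' : X := ⟨y, hy⟩
        set a' : X := ⟨a, ha⟩
        set b' : X := ⟨b, hb⟩
        have hxy' : x' ≠ y' := fun h => hne (congrArg Subtype.val h)
        set τ : Equiv.Perm X := Equiv.swap x' a'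
        have hτx : τ x' = a' := Equiv.swap_apply_left x' a'
        set σ : Equiv.Perm X := τ.trans (Equiv.swap (τ y') b')
        have hτy_ne_a : τ y' ≠ a' := by
          exact fun h => hxy' (τ.injective (h.trans hτx.symm)).symm
        have hab' : a' ≠ b' := fun h => hab (congrArg Subtype.val h)
        have hσx : σ x' = a' := by
          simp only [σ, Equiv.trans_apply, hτx]
          exact Equiv.swap_apply_of_ne_of_ne (Ne.symm hτy_ne_a) hab'
        have hσy : σ y' = b' := by
          simp only [σ, Equiv.trans_apply]
          exact Equiv.swap_apply_left _ _
        obtain ⟨g, hg⟩ := hperm σ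
        have h1 := hg x'
        have h2 := hg y'
        rw [hσx] at h1
        rw [hσy] at h2
        have : ρ (g * x * g⁻¹) = ρ (g * y * g⁻¹) := by
          simp only [map_mul, map_inv, hxy]
        rw [h1, h2] at this
        exact this
    refine ⟨ρ x, ?_⟩
    ext h
    constructor
    · rintro ⟨z, hz, rfl⟩
      exact key z hz x hx
    · rintro rfl
      exact ⟨x, hx, rfl⟩
end

section
/- If X = {x₁, ..., xₘ} is a totally symmetric subset of a group G, then for any integer k the set Xᵏ = {x₁ᵏ, ..., xₘᵏ} is also a totally symmetric subset of G. -/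
/-- If `X` is a totally symmetric subset of `G`, then so is the set of `k`-th
powers of elements of `G`, for any integer `k`. -/
theorem stmt_1 {G : Type*} [Group G] (X : Set G)
    (hX : IsTotallySymmetric X) (k : ℤ) :
    IsTotallySymmetric ((fun x : G => x ^ k) '' X) := by
  obtain ⟨hcomm, hperm⟩ := hX
  constructor
  · rintro a ⟨x, hx, rfl⟩ b ⟨z, hz, rfl⟩
    have h : Commute x z := hcomm x hx z hz
    exact (h.zpow_zpow k k).eq
  · intro σ
    classical
    by_cases hsub : Set.Subsingleton ((fun x : G => x ^ k) '' X)
    · refine ⟨1, fun x => ?_⟩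
      have : σ x = x := hsub.coe_sort.elim (σ x) x
      simp [this]
    · -- the map is injective on X
      have hinj : Set.InjOn (fun x : G => x ^ k) X := by
        intro x hx z hz hxz
        have hxz' : x ^ k = z ^ k := hxz
        by_contra hne
        apply hsub
        -- show all elements of the image equal x ^ k
        have key : ∀ y ∈ ((fun x : G => x ^ k) '' X), y = x ^ k := by
          rintro y ⟨x', hx', rfl⟩
          by_cases hzx' : z = x'
          · show x' ^ k = x ^ k
            rw [← hzx', ← hxz']
          · obtain ⟨g, hg⟩ := hperm (Equiv.swap ⟨x, hx⟩ ⟨x', hx'⟩)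
            have hz' : g * z * g⁻¹ = z := by
              have := hg ⟨z, hz⟩
              rwa [Equiv.swap_apply_of_ne_of_ne
                (by simp; exact fun h => hne h.symm) (by simp [hzx'])] at this
            have hx'' : g * x * g⁻¹ = x' := by
              simpa using hg ⟨x, hx⟩
            have h1 : g * z ^ k * g⁻¹ = z ^ k := by
              rw [← conj_zpow, hz']
            have h2 : g * x ^ k * g⁻¹ = x' ^ k := by
              rw [← conj_zpow, hx'']
            rw [← hxz'] at h1
            rw [h1] at h2
            exact h2.symm
        intro a ha b hb
        rw [key a ha, key b hb]
      -- lift σ to a permutation of X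
      let e : X ≃ ((fun x : G => x ^ k) '' X) := Equiv.Set.imageOfInjOn _ X hinj
      let τ : Equiv.Perm X := (e.trans σ).trans e.symm
      obtain ⟨g, hg⟩ := hperm τ
      refine ⟨g, ?_⟩
      rintro ⟨y, x, hx, rfl⟩
      have hτ : (τ ⟨x, hx⟩ : G) ^ k = (σ ⟨x ^ k, ⟨x, hx, rfl⟩⟩ : G) := by
        have : e (τ ⟨x, hx⟩) = σ (e ⟨x, hx⟩) := by
          simp [τ]
        have h2 : ((e (τ ⟨x, hx⟩) : G)) = (τ ⟨x, hx⟩ : G) ^ k := rfl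
        have h3 : e ⟨x, hx⟩ = ⟨x ^ k, ⟨x, hx, rfl⟩⟩ := rfl
        rw [h3] at this
        rw [← h2, this]
      calc g * x ^ k * g⁻¹ = (g * x * g⁻¹) ^ k := by rw [conj_zpow]
        _ = (τ ⟨x, hx⟩ : G) ^ k := by rw [hg ⟨x, hx⟩]
        _ = _ := hτ
end

section
/- If X = {x₁, x₂, ..., xₘ} is a totally symmetric subset of a group G with m ≥ 2, then the set X' = {x₁x₂⁻¹, x₁x₃⁻¹, ..., x₁xₘ⁻¹} is a totally symmetric subset of G of cardinality m−1 (provided its listed elements are distinct). -/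
theorem isTotallySymmetric_range_iff {G ι : Type*} [Group G] {x : ι → G}
    (hx : Function.Injective x) :
    IsTotallySymmetric (Set.range x) ↔
      (∀ i j, Commute (x i) (x j)) ∧
        ∀ τ : Equiv.Perm ι, ∃ g : G, ∀ i, g * x i * g⁻¹ = x (τ i) := by
  let e : ι ≃ Set.range x := Equiv.ofInjective x hx
  have he : ∀ i, (e i : G) = x i := fun _ => rfl
  refine and_congr (by simp [Commute, SemiconjBy]) ⟨fun h τ => ?_, fun h σ => ?_⟩
  · obtain ⟨g, hg⟩ := h (e.permCongr τ)
    exact ⟨g, fun i => by simpa [he] using hg (e i)⟩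
  · obtain ⟨g, hg⟩ := h (e.symm.permCongr σ)
    refine ⟨g, fun y => ?_⟩
    obtain ⟨i, rfl⟩ := e.surjective y
    rw [he, hg i, Equiv.permCongr_apply, Equiv.symm_symm, ← he, e.apply_symm_apply]

theorem stmt_2_general {G : Type*} [Group G] (m : ℕ)
    (x : Fin (m + 1) → G) (hxinj : Function.Injective x)
    (hX : IsTotallySymmetric (Set.range x))
    (hdist : Function.Injective (fun j : Fin m => x 0 * (x j.succ)⁻¹)) :
    IsTotallySymmetric (Set.range (fun j : Fin m => x 0 * (x j.succ)⁻¹)) ∧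
      (Set.range (fun j : Fin m => x 0 * (x j.succ)⁻¹)).ncard = m := by
  obtain ⟨hcomm, hperm⟩ := (isTotallySymmetric_range_iff hxinj).1 hX
  refine ⟨(isTotallySymmetric_range_iff hdist).2 ⟨fun i j => ?_, fun τ => ?_⟩, ?_⟩
  · exact ((hcomm 0 0).mul_right (hcomm 0 j.succ).inv_right).mul_left
      ((hcomm i.succ 0).inv_left.mul_right (hcomm i.succ j.succ).inv_left.inv_right)
  · obtain ⟨g, hg⟩ := hperm (Equiv.Perm.decomposeFin.symm (0, τ))
    refine ⟨g, fun j => ?_⟩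
    have h0 := hg 0
    have hj := hg j.succ
    simp only [Equiv.Perm.decomposeFin_symm_apply_zero, Equiv.Perm.decomposeFin_symm_apply_succ,
      Equiv.swap_self, Equiv.refl_apply] at h0 hj
    calc g * (x 0 * (x j.succ)⁻¹) * g⁻¹ = (g * x 0 * g⁻¹) * (g * x j.succ * g⁻¹)⁻¹ := by group
      _ = x 0 * (x (τ j).succ)⁻¹ := by rw [h0, hj]
  · rw [Set.ncard_range_of_injective hdist, Nat.card_fin]

/-- If `X = {x₀, x₁, …, x_m}` is a totally symmetric subset of `G` (of
cardinality `m + 1 ≥ 2`), then `X' = {x₀x₁⁻¹, …, x₀x_m⁻¹}` is a totally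
symmetric subset of cardinality `m`, provided its listed elements are
distinct. -/
theorem stmt_2 {G : Type*} [Group G] (m : ℕ) (hm : 1 ≤ m)
    (x : Fin (m + 1) → G) (hxinj : Function.Injective x)
    (hX : IsTotallySymmetric (Set.range x))
    (hdist : Function.Injective (fun j : Fin m => x 0 * (x j.succ)⁻¹)) :
    IsTotallySymmetric (Set.range (fun j : Fin m => x 0 * (x j.succ)⁻¹)) ∧
      (Set.range (fun j : Fin m => x 0 * (x j.succ)⁻¹)).ncard = m :=
  stmt_2_general m x hxinj hX hdist
end

section
/- Let X be a totally symmetric subset of a group G with |X| = k such that every element of X has finite order. Then the subgroup generated by X is a finite abelian group of order at least 2^{k−1}. -/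
/-!
The generators commute, so `⟨X⟩` is abelian; being generated by finitely many elements of finite
order, it is finite. For the bound fix `b ∈ X` and send each subset `s ⊆ X \ {b}` to `∏ s`. If two
such products agree while `a ∈ s \ t`, conjugate by an element realizing the transposition of `a`
and `b`: it fixes `∏ t` but replaces the factor `a` of `∏ s` by `b`, forcing `a = b`. So the
`2 ^ (k - 1)` subsets give distinct elements of `⟨X⟩`.
-/

open Finset in
theorem Finset.injOn_prod_powerset_of_swap {M : Type*} [CancelCommMonoid M] {E : Finset M}
    {b : M} (hb : b ∉ E)
    (hswap : ∀ a ∈ E, ∃ φ : M →* M, φ a = b ∧ ∀ c ∈ E, c ≠ a → φ c = c) :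
    Set.InjOn (fun s : Finset M => ∏ x ∈ s, x) E.powerset := by
  classical
  suffices h : ∀ s ⊆ E, ∀ t ⊆ E, ∏ x ∈ s, x = ∏ x ∈ t, x → s ⊆ t by
    intro s hs t ht hst
    rw [mem_coe, mem_powerset] at hs ht
    exact (h s hs t ht hst).antisymm (h t ht s hs hst.symm)
  intro s hs t ht hst a has
  by_contra hat
  obtain ⟨φ, hφa, hφ⟩ := hswap a (hs has)
  have hfix : ∀ u ⊆ E, a ∉ u → φ (∏ x ∈ u, x) = ∏ x ∈ u, x := fun u hu hau => by
    rw [map_prod]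
    exact prod_congr rfl fun c hc => hφ c (hu hc) (ne_of_mem_of_not_mem hc hau)
  have hs' : ∏ x ∈ s, x = a * ∏ x ∈ s.erase a, x := (mul_prod_erase s id has).symm
  have hba : b * ∏ x ∈ s.erase a, x = a * ∏ x ∈ s.erase a, x :=
    calc b * ∏ x ∈ s.erase a, x = φ (∏ x ∈ s, x) := by
          rw [hs', map_mul, hφa, hfix _ ((erase_subset a s).trans hs) (notMem_erase a s)]
      _ = ∏ x ∈ t, x := by rw [hst, hfix t ht hat]
      _ = a * ∏ x ∈ s.erase a, x := hst.symm.trans hs'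
  exact hb (mul_right_cancel hba ▸ hs has)

theorem two_pow_ncard_sub_one_le_natCard_of_swap {M : Type*} [CancelCommMonoid M] [Finite M]
    {Y : Set M}
    (hswap : ∀ a ∈ Y, ∀ b ∈ Y, ∃ φ : M →* M, φ a = b ∧ ∀ c ∈ Y, c ≠ a → c ≠ b → φ c = c) :
    2 ^ (Y.ncard - 1) ≤ Nat.card M := by
  classical
  rcases Y.eq_empty_or_nonempty with rfl | ⟨b, hb⟩
  · rw [Set.ncard_empty]
    exact Nat.card_pos
  have := Fintype.ofFinite M
  set E := (Y \ {b}).toFinite.toFinset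
  have hE : E.card = Y.ncard - 1 := by
    rw [← Set.ncard_eq_toFinset_card, Set.ncard_sdiff_singleton_of_mem hb]
  have hinj : Set.InjOn (fun s : Finset M => ∏ x ∈ s, x) E.powerset := by
    refine Finset.injOn_prod_powerset_of_swap (b := b) (by simp [E]) fun a ha => ?_
    simp only [E, Set.Finite.mem_toFinset, Set.mem_sdiff, Set.mem_singleton_iff] at ha
    obtain ⟨φ, hφa, hφ⟩ := hswap a ha.1 b hb
    refine ⟨φ, hφa, fun c hc hca => hφ c ?_ hca ?_⟩ <;>
      simp_all [E]
  calc 2 ^ (Y.ncard - 1) = E.powerset.card := by rw [Finset.card_powerset, hE]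
    _ ≤ (Finset.univ : Finset M).card :=
      Finset.card_le_card_of_injOn _ (fun _ _ => Finset.mem_coe.2 (Finset.mem_univ _)) hinj
    _ = Nat.card M := (Nat.card_eq_fintype_card).symm

section
variable {G : Type*} [Group G] {X : Set G}

theorem Subgroup.isMulTorsion_closure_of_commute (hcomm : ∀ x ∈ X, ∀ y ∈ X, x * y = y * x)
    (hord : ∀ x ∈ X, IsOfFinOrder x) : IsMulTorsion (Subgroup.closure X) := by
  have := Subgroup.isMulCommutative_closure hcomm
  rintro ⟨g, hg⟩
  rw [← Submonoid.isOfFinOrder_coe]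
  induction hg using Subgroup.closure_induction with
  | mem x hx => exact hord x hx
  | one => exact IsOfFinOrder.one
  | mul x y hx hy hxo hyo => exact Commute.isOfFinOrder_mul (setLike_mul_comm hx hy) hxo hyo
  | inv x _ hxo => exact hxo.inv

open scoped IsMulCommutative in
theorem Subgroup.finite_closure_of_commute_of_isOfFinOrder (hfin : X.Finite)
    (hcomm : ∀ x ∈ X, ∀ y ∈ X, x * y = y * x) (hord : ∀ x ∈ X, IsOfFinOrder x) :
    Finite (Subgroup.closure X) := by
  have := Subgroup.isMulCommutative_closure hcomm
  have : Group.FG (Subgroup.closure X) :=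
    (Group.fg_iff_subgroup_fg _).2 ((Subgroup.fg_iff _).2 ⟨X, rfl, hfin⟩)
  exact CommGroup.finite_of_fg_isMulTorsion _ (isMulTorsion_closure_of_commute hcomm hord)

theorem IsTotallySymmetric.exists_conj_swap (hX : IsTotallySymmetric X) {a b : G}
    (ha : a ∈ X) (hb : b ∈ X) :
    ∃ g : G, g * a * g⁻¹ = b ∧ g * b * g⁻¹ = a ∧
      ∀ x ∈ X, x ≠ a → x ≠ b → g * x * g⁻¹ = x := by
  classical
  obtain ⟨g, hg⟩ := hX.2 (Equiv.swap ⟨a, ha⟩ ⟨b, hb⟩)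
  refine ⟨g, by simpa using hg ⟨a, ha⟩, by simpa using hg ⟨b, hb⟩, fun x hx hxa hxb => ?_⟩
  rw [hg ⟨x, hx⟩, Equiv.swap_apply_of_ne_of_ne] <;> simpa [Subtype.ext_iff]

theorem IsTotallySymmetric.exists_swap_endomorphism_closure (hX : IsTotallySymmetric X)
    {a b : Subgroup.closure X} (ha : (a : G) ∈ X) (hb : (b : G) ∈ X) :
    ∃ φ : Subgroup.closure X →* Subgroup.closure X,
      φ a = b ∧ ∀ c : Subgroup.closure X, (c : G) ∈ X → c ≠ a → c ≠ b → φ c = c := by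
  obtain ⟨g, hga, hgb, hg⟩ := hX.exists_conj_swap ha hb
  have hmaps : Subgroup.closure X ≤ (Subgroup.closure X).comap (MulAut.conj g).toMonoidHom := by
    refine (Subgroup.closure_le _).2 fun x hx => Subgroup.subset_closure ?_
    by_cases hxa : x = a
    · simpa [hxa, hga] using hb
    by_cases hxb : x = b
    · simpa [hxb, hgb] using ha
    simpa [hg x hx hxa hxb] using hx
  refine ⟨((MulAut.conj g).toMonoidHom.domRestrict (Subgroup.closure X)).codRestrict
      (Subgroup.closure X) fun c => hmaps c.2,
    Subtype.ext (by simpa using hga), fun c hc hca hcb => Subtype.ext ?_⟩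
  simpa using hg c hc (Subtype.coe_injective.ne hca) (Subtype.coe_injective.ne hcb)

end

open scoped IsMulCommutative in
/-- If `X` is a totally symmetric subset of `G` with `|X| = k` all of whose
elements have finite order, then the subgroup generated by `X` is a finite
abelian group of order at least `2 ^ (k - 1)`. -/
theorem stmt_3 {G : Type*} [Group G] (X : Set G) (k : ℕ)
    (hX : IsTotallySymmetric X) (hfin : X.Finite) (hcard : X.ncard = k)
    (hord : ∀ x ∈ X, IsOfFinOrder x) :
    ((Subgroup.closure X : Subgroup G) : Set G).Finite ∧
      (∀ a ∈ Subgroup.closure X, ∀ b ∈ Subgroup.closure X, a * b = b * a) ∧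
      2 ^ (k - 1) ≤ Nat.card (Subgroup.closure X) := by
  have := Subgroup.isMulCommutative_closure hX.1
  have := Subgroup.finite_closure_of_commute_of_isOfFinOrder hfin hX.1 hord
  refine ⟨Set.toFinite _, fun a ha b hb => setLike_mul_comm ha hb, ?_⟩
  have hY : (Subtype.val ⁻¹' X : Set (Subgroup.closure X)).ncard = k := by
    rw [← hcard]
    exact Set.ncard_preimage_of_injective_subset_range Subtype.val_injective
      (by rw [Subtype.range_coe]; exact Subgroup.subset_closure)
  rw [← hY]
  exact two_pow_ncard_sub_one_le_natCard_of_swap fun a ha b hb =>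
    hX.exists_swap_endomorphism_closure ha hb
end

section
/- If a group G contains a totally symmetric subset of k elements of finite order, and every finite abelian subgroup of G has order at most 4g + 4, then g ≥ 2^{k−3} − 1. -/
open Finset Subgroup

-- Models the conjugations realizing permutations of a totally symmetric set `X`, restricted to
-- endomorphisms of the abelian group generated by `X`.
def IsSymmetricFamily {α M : Type*} [MulOneClass M] (f : α → M) : Prop :=
  ∀ σ : Equiv.Perm α, ∃ φ : M →* M, ∀ a, φ (f a) = f (σ a)

namespace IsSymmetricFamily

variable {α M : Type*} [CancelCommMonoid M] {f : α → M}

theorem subset_of_prod_eq [DecidableEq α] (hf : IsSymmetricFamily f) (hinj : f.Injective)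
    {a₀ : α} {u v : Finset α} (hu : a₀ ∉ u) (hv : a₀ ∉ v)
    (huv : ∏ a ∈ u, f a = ∏ a ∈ v, f a) : u ⊆ v := by
  intro i hi
  by_contra hiv
  obtain ⟨φ, hφ⟩ := hf (Equiv.swap i a₀)
  have hfix : ∀ w : Finset α, i ∉ w → a₀ ∉ w → φ (∏ a ∈ w, f a) = ∏ a ∈ w, f a := by
    intro w hiw ha₀w
    rw [map_prod]
    refine prod_congr rfl fun a ha => ?_
    rw [hφ, Equiv.swap_apply_of_ne_of_ne (ne_of_mem_of_not_mem ha hiw)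
      (ne_of_mem_of_not_mem ha ha₀w)]
  have hswap : f a₀ * ∏ a ∈ u.erase i, f a = f i * ∏ a ∈ u.erase i, f a :=
    calc f a₀ * ∏ a ∈ u.erase i, f a
        = φ (f i * ∏ a ∈ u.erase i, f a) := by
          rw [map_mul, hφ, Equiv.swap_apply_left,
            hfix _ (notMem_erase i u) fun h => hu (mem_of_mem_erase h)]
      _ = φ (∏ a ∈ v, f a) := by rw [mul_prod_erase u f hi, huv]
      _ = ∏ a ∈ u, f a := by rw [hfix v hiv hv, huv]
      _ = f i * ∏ a ∈ u.erase i, f a := (mul_prod_erase u f hi).symm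
  exact ne_of_mem_of_not_mem hi hu (hinj (mul_right_cancel hswap)).symm

theorem injOn_prod [DecidableEq α] (hf : IsSymmetricFamily f) (hinj : f.Injective) (a₀ : α) :
    Set.InjOn (fun u : Finset α => ∏ a ∈ u, f a) {u | a₀ ∉ u} := fun _ hu _ hv huv =>
  (hf.subset_of_prod_eq hinj hu hv huv).antisymm (hf.subset_of_prod_eq hinj hv hu huv.symm)

theorem two_pow_card_sub_one_le_card [Finite α] [Finite M] (hf : IsSymmetricFamily f)
    (hinj : f.Injective) : 2 ^ (Nat.card α - 1) ≤ Nat.card M := by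
  classical
  cases isEmpty_or_nonempty α with
  | inl _ => rw [Nat.card_of_isEmpty]; exact Nat.card_pos
  | inr h =>
    obtain ⟨a₀⟩ := h
    have := Fintype.ofFinite α
    have := Fintype.ofFinite M
    have hpow : ∀ u ∈ (univ.erase a₀).powerset, a₀ ∉ u := fun u hu h =>
      notMem_erase a₀ univ (mem_powerset.1 hu h)
    calc 2 ^ (Nat.card α - 1) = #(univ.erase a₀).powerset := by
          rw [card_powerset, card_erase_of_mem (mem_univ a₀), card_univ, Nat.card_eq_fintype_card]
      _ ≤ #(univ : Finset M) :=
          card_le_card_of_injOn _ (fun _ _ => mem_univ _) fun u hu v hv =>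
            hf.injOn_prod hinj a₀ (hpow u hu) (hpow v hv)
      _ = Nat.card M := by rw [card_univ, Nat.card_eq_fintype_card]

end IsSymmetricFamily

open scoped IsMulCommutative in
theorem Subgroup.finite_closure_of_isOfFinOrder {G : Type*} [Group G] {X : Set G}
    (hfin : X.Finite) (hcomm : ∀ x ∈ X, ∀ y ∈ X, x * y = y * x)
    (hord : ∀ x ∈ X, IsOfFinOrder x) : Finite (closure X) := by
  have := isMulCommutative_closure hcomm
  have := hfin.to_subtype
  refine CommGroup.finite_of_fg_isMulTorsion _ fun ⟨y, hy⟩ => Submonoid.isOfFinOrder_coe.1 ?_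
  induction hy using closure_induction with
  | mem x hx => exact hord x hx
  | one => exact IsOfFinOrder.one
  | mul x y hx hy hxo hyo => exact Commute.isOfFinOrder_mul (setLike_mul_comm hx hy) hxo hyo
  | inv x _ hxo => exact hxo.inv

theorem IsTotallySymmetric.isSymmetricFamily_closure {G : Type*} [Group G] {X : Set G}
    (hX : IsTotallySymmetric X) :
    IsSymmetricFamily fun x : X => (⟨x, subset_closure x.2⟩ : closure X) := by
  intro σ
  obtain ⟨a, ha⟩ := hX.2 σ
  have hmaps : closure X ≤ (closure X).comap (MulAut.conj a).toMonoidHom :=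
    closure_le _ |>.2 fun x hx => subset_closure <| by simp [ha ⟨x, hx⟩]
  refine ⟨((MulAut.conj a).toMonoidHom.comp (closure X).subtype).codRestrict _
    fun y => hmaps y.2, fun x => Subtype.ext (ha x)⟩

open scoped IsMulCommutative in
theorem IsTotallySymmetric.two_pow_ncard_sub_one_le_card_closure {G : Type*} [Group G]
    {X : Set G} (hX : IsTotallySymmetric X) [Finite (closure X)] :
    2 ^ (X.ncard - 1) ≤ Nat.card (closure X) := by
  have := isMulCommutative_closure hX.1
  have : Finite X := Finite.Set.subset (closure X : Set G) subset_closure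
  rw [← Nat.card_coe_set_eq]
  exact hX.isSymmetricFamily_closure.two_pow_card_sub_one_le_card
    fun _ _ h => Subtype.ext (congrArg Subtype.val h :)

theorem stmt_8_general {G : Type*} [Group G] (X : Set G) (k g : ℕ)
    (hX : IsTotallySymmetric X) (hcard : X.ncard = k)
    (hord : ∀ x ∈ X, IsOfFinOrder x)
    (habel : ∀ H : Subgroup G, (∀ a ∈ H, ∀ b ∈ H, a * b = b * a) →
      (H : Set G).Finite → Nat.card H ≤ 4 * g + 4) :
    2 ^ (k - 3) - 1 ≤ g := by
  rcases le_or_gt k 3 with hk | hk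
  · simp [Nat.sub_eq_zero_of_le hk]
  have hfin : X.Finite := Set.finite_of_ncard_pos (by omega)
  have := finite_closure_of_isOfFinOrder hfin hX.1 hord
  have := isMulCommutative_closure hX.1
  have hsubsets := hcard ▸ hX.two_pow_ncard_sub_one_le_card_closure
  have habelian := habel (closure X) (fun _ ha _ hb => setLike_mul_comm ha hb) (Set.toFinite _)
  have hpow : 2 ^ (k - 1) = 4 * 2 ^ (k - 3) := by
    rw [show k - 1 = k - 3 + 2 by omega, pow_add]; ring
  omega

/-- If `G` contains a totally symmetric subset of `k` elements of finite order
and every finite abelian subgroup of `G` has order at most `4g + 4`, then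
`g ≥ 2 ^ (k - 3) - 1`. -/
theorem stmt_8 {G : Type*} [Group G] (X : Set G) (k g : ℕ)
    (hX : IsTotallySymmetric X) (hfin : X.Finite) (hcard : X.ncard = k)
    (hord : ∀ x ∈ X, IsOfFinOrder x)
    (habel : ∀ H : Subgroup G, (∀ a ∈ H, ∀ b ∈ H, a * b = b * a) →
      (H : Set G).Finite → Nat.card H ≤ 4 * g + 4) :
    2 ^ (k - 3) - 1 ≤ g :=
  stmt_8_general X k g hX hcard hord habel
end
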